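/- Let G be a connected P_t-free graph (t ≥ 3) and let H_t be as defined. Then for every homomorphism h : G → H_t, either no vertex of G is mapped into {0, 1}, or no vertex of G is mapped into {t, t+1, a, b, a', b'}. -/

import Mathlib

open SimpleGraph

def Ht (t : ℕ) : SimpleGraph (ZMod (2 * t) ⊕ Fin 4) :=
  SimpleGraph.fromRel (fun x y =>
    match x, y with
    | Sum.inl i, Sum.inl j => j = i + 1
    | Sum.inl i, Sum.inr j =>
        (i = ((t : ℕ) + 1 : ℕ) ∧ (j : ℕ) = 0) ∨ (i = (t : ℕ) ∧ (j : ℕ) = 2)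
    | Sum.inr i, Sum.inr j =>
        ((i : ℕ) = 0 ∧ (j : ℕ) = 2) ∨ ((i : ℕ) = 0 ∧ (j : ℕ) = 1) ∨
          ((i : ℕ) = 2 ∧ (j : ℕ) = 3)
    | _, _ => False)

/-!
A shortest path in a connected `P_t`-free graph has at most `t - 1` vertices, since its vertices
induce a path; so any two vertices are at distance at most `t - 2`. A homomorphism maps a shortest
path to a walk of the same length in `H_t`, along which the distance to `{0, 1}` grows by at most
one per step. But `t`, `t + 1`, `a`, `b`, `a'`, `b'` are at distance at least `t - 1` from `{0, 1}`.
-/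

namespace SimpleGraph

variable {V : Type*} {G : SimpleGraph V} {u v : V}

lemma Walk.dist_getVert_of_length_eq_dist {p : G.Walk u v} (hp : p.length = G.dist u v)
    {i : ℕ} (hi : i ≤ p.length) : G.dist u (p.getVert i) = i := by
  rw [← length_eq_dist_of_subwalk hp (p.isSubwalk_take i), take_length]
  omega

def Walk.pathGraphEmbeddingOfLengthEqDist (p : G.Walk u v) (hp : p.length = G.dist u v)
    {n : ℕ} (hn : n ≤ p.length + 1) : pathGraph n ↪g G where
  toFun k := p.getVert k
  inj' a b hab := Fin.ext <| (p.isPath_of_length_eq_dist hp).getVert_injOn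
    (show (a : ℕ) ≤ p.length by omega) (show (b : ℕ) ≤ p.length by omega) hab
  map_rel_iff' {a b} := by
    show G.Adj (p.getVert a) (p.getVert b) ↔ (pathGraph n).Adj a b
    have ha := p.dist_getVert_of_length_eq_dist hp (i := a) (by omega)
    have hb := p.dist_getVert_of_length_eq_dist hp (i := b) (by omega)
    rw [pathGraph_adj]
    constructor
    · intro hadj
      have hne : (a : ℕ) ≠ b := fun h => hadj.ne (by rw [h])
      have := hadj.diff_dist_adj (u := u)
      omega
    · rintro (hab | hab)
      · exact hab ▸ p.adj_getVert_succ (by omega)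
      · exact (hab ▸ p.adj_getVert_succ (by omega)).symm

lemma Reachable.nonempty_pathGraph_embedding (hr : G.Reachable u v) {n : ℕ}
    (hn : n ≤ G.dist u v + 1) : Nonempty (pathGraph n ↪g G) := by
  obtain ⟨p, hp⟩ := hr.exists_walk_length_eq_dist
  exact ⟨p.pathGraphEmbeddingOfLengthEqDist hp (hp ▸ hn)⟩

lemma Walk.apply_le_add_length {f : V → ℕ} (hf : ∀ x y, G.Adj x y → f y ≤ f x + 1)
    (p : G.Walk u v) : f v ≤ f u + p.length := by
  induction p with
  | nil => simp
  | cons hadj _ ih =>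
    have := hf _ _ hadj
    rw [length_cons]
    omega

end SimpleGraph

lemma ZMod.val_add_one_eq_or {n : ℕ} (hn : 1 < n) (i : ZMod n) :
    (i + 1).val = i.val + 1 ∨ (i.val + 1 = n ∧ (i + 1).val = 0) := by
  have : NeZero n := ⟨by omega⟩
  have hi := i.val_lt
  rw [ZMod.val_add, ZMod.val_one'' (by omega)]
  rcases Nat.lt_or_eq_of_le (hi : i.val + 1 ≤ n) with h | h
  · exact .inl (Nat.mod_eq_of_lt h)
  · exact .inr ⟨h, by rw [show i.val + 1 = n from h, Nat.mod_self]⟩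

/-- The graph distance in `H_t` to `{0, 1}`. -/
def htLevel (t : ℕ) : ZMod (2 * t) ⊕ Fin 4 → ℕ
  | .inl i => min (i.val - 1) (2 * t - i.val)
  | .inr j => t + j.val % 2

section htLevel

variable {t : ℕ}

lemma htLevel_inl_add_one (ht : 1 ≤ t) (i : ZMod (2 * t)) :
    htLevel t (.inl (i + 1)) ≤ htLevel t (.inl i) + 1 ∧
      htLevel t (.inl i) ≤ htLevel t (.inl (i + 1)) + 1 := by
  have : NeZero (2 * t) := ⟨by omega⟩
  have := i.val_lt
  have := ZMod.val_add_one_eq_or (by omega) i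
  simp only [htLevel]
  omega

lemma htLevel_le_of_adj (ht : 2 ≤ t) {x y : ZMod (2 * t) ⊕ Fin 4} (hxy : (Ht t).Adj x y) :
    htLevel t y ≤ htLevel t x + 1 := by
  have hval_t : ((t : ℕ) : ZMod (2 * t)).val = t := ZMod.val_natCast_of_lt (by omega)
  have hval_t_add_one : ((t + 1 : ℕ) : ZMod (2 * t)).val = t + 1 :=
    ZMod.val_natCast_of_lt (by omega)
  rcases x with i | j <;> rcases y with i' | j' <;>
    simp only [Ht, fromRel_adj, Sum.inl.injEq, Sum.inr.injEq, reduceCtorEq, ne_eq,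
      not_false_eq_true, true_and, or_false, false_or] at hxy
  case inr.inr =>
    simp only [htLevel]
    omega
  · rcases hxy.2 with rfl | rfl
    · exact (htLevel_inl_add_one (by omega) i).1
    · exact (htLevel_inl_add_one (by omega) i').2
  all_goals
    rcases hxy with ⟨rfl, hj⟩ | ⟨rfl, hj⟩ <;>
      simp only [htLevel, hval_t, hval_t_add_one, hj] <;> omega

lemma htLevel_eq_zero_of_mem {x : ZMod (2 * t) ⊕ Fin 4}
    (hx : x ∈ ({.inl 0, .inl 1} : Set (ZMod (2 * t) ⊕ Fin 4))) : htLevel t x = 0 := by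
  rcases hx with rfl | rfl <;> simp only [htLevel]
  · simp
  · rw [ZMod.val_one'' (by omega)]
    omega

lemma sub_one_le_htLevel_of_mem (ht : 2 ≤ t) {x : ZMod (2 * t) ⊕ Fin 4}
    (hx : x ∈ ({.inl ((t : ℕ) : ZMod (2 * t)), .inl (((t : ℕ) + 1 : ℕ) : ZMod (2 * t)),
      .inr 0, .inr 1, .inr 2, .inr 3} : Set (ZMod (2 * t) ⊕ Fin 4))) :
    t - 1 ≤ htLevel t x := by
  rcases hx with rfl | rfl | rfl | rfl | rfl | rfl <;> simp only [htLevel]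
  · rw [ZMod.val_natCast_of_lt (by omega)]
    omega
  · rw [ZMod.val_natCast_of_lt (by omega)]
    omega
  all_goals omega

end htLevel

/-- For a connected `P_t`-free graph `G` and a homomorphism `h : G → H_t`,
either no vertex of `G` is mapped into `{0, 1}`, or no vertex is mapped into
`{t, t+1, a, b, a', b'}`. -/
theorem stmt16 {V : Type*} (t : ℕ) (ht : 3 ≤ t) (G : SimpleGraph V)
    (hconn : G.Connected) (hPtfree : ¬ Nonempty (pathGraph t ↪g G))
    (h : G →g Ht t) :
    (∀ v : V, h v ∉ ({Sum.inl 0, Sum.inl 1} : Set (ZMod (2 * t) ⊕ Fin 4))) ∨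
    (∀ v : V, h v ∉ ({Sum.inl ((t : ℕ) : ZMod (2 * t)),
        Sum.inl (((t : ℕ) + 1 : ℕ) : ZMod (2 * t)),
        Sum.inr 0, Sum.inr 1, Sum.inr 2, Sum.inr 3} :
        Set (ZMod (2 * t) ⊕ Fin 4))) := by
  by_contra! ⟨⟨u, hu⟩, v, hv⟩
  have hdist : G.dist u v + 2 ≤ t := by
    by_contra! hlt
    exact hPtfree ((hconn u v).nonempty_pathGraph_embedding (by omega))
  obtain ⟨p, hp⟩ := hconn.exists_walk_length_eq_dist u v
  have hlevel := (p.map h).apply_le_add_length (fun _ _ => htLevel_le_of_adj (by omega))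
  rw [Walk.length_map, hp, htLevel_eq_zero_of_mem hu] at hlevel
  have := sub_one_le_htLevel_of_mem (by omega) hv
  omega
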